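/- The relation C_1^2 C_2 = (1+27q)^{−1} for local P^2: In ℚ[[q]] define I_1 = 3·Σ_{d≥1}(−1)^d (3d−1)!/(d!)^3 q^d, I_{2,0} = 3·Σ_{d≥1}(−1)^d (3d−1)!/(d!)^3 (3Har[3d−1] − 3Har[d]) q^d with Har[m] = Σ_{k=1}^{m} 1/k, C_1 = 1 + 𝖣I_1, J = (I_1 + 𝖣I_{2,0})/C_1, and C_2 = 1 + 𝖣J, where 𝖣 = q·d/dq. Then (1+27q)·C_1^2·C_2 = 1 in ℚ[[q]]. -/

import Mathlib

/-!
The coefficients of `I₁` satisfy a hypergeometric recurrence, so `C₁` is annihilated by the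
Picard–Fuchs operator `L = 𝖣(1+27q)𝖣 + 6q`. Differentiating that recurrence in the Frobenius
parameter produces the harmonic numbers of `I₂₀`, and shows that `P = C₁J = I₁ + 𝖣I₂₀` solves
`L P = -(1+27q)𝖣C₁ - 𝖣((1+27q)C₁)`. Because `L` is in divergence form, the Lagrange identity
`𝖣((1+27q)(C₁𝖣P - P𝖣C₁)) = C₁·L P - P·L C₁` applies, and together with
`C₁²C₂ = C₁² + C₁𝖣P - P𝖣C₁` it gives `𝖣((1+27q)C₁²C₂) = 0`. Hence `(1+27q)C₁²C₂` is the
constant `1`.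
-/

noncomputable section

/-- The derivation `𝖣 = q·d/dq` on `ℚ[[q]]`. -/
def Dq (G : PowerSeries ℚ) : PowerSeries ℚ :=
  PowerSeries.mk fun d => (d : ℚ) * PowerSeries.coeff d G

/-- Harmonic number `Har[m] = Σ_{k=1}^m 1/k`. -/
def Har (m : ℕ) : ℚ := ∑ k ∈ Finset.range m, ((k : ℚ) + 1)⁻¹

/-- `I₁ = 3·Σ_{d≥1} (−1)^d (3d−1)!/(d!)^3 q^d`. -/
def I₁ : PowerSeries ℚ :=
  PowerSeries.mk fun d => if d = 0 then 0 else
    3 * (-1 : ℚ) ^ d * ((3 * d - 1).factorial : ℚ) / ((d.factorial : ℚ)) ^ 3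

/-- `I₂₀ = 3·Σ_{d≥1} (−1)^d (3d−1)!/(d!)^3 (3Har[3d−1] − 3Har[d]) q^d`. -/
def I₂₀ : PowerSeries ℚ :=
  PowerSeries.mk fun d => if d = 0 then 0 else
    3 * (-1 : ℚ) ^ d * ((3 * d - 1).factorial : ℚ) / ((d.factorial : ℚ)) ^ 3
      * (3 * Har (3 * d - 1) - 3 * Har d)

/-- `C₁ = 1 + 𝖣I₁`. -/
def C₁ : PowerSeries ℚ := 1 + Dq I₁

/-- `J = (I₁ + 𝖣I₂₀)/C₁`. -/
def J : PowerSeries ℚ := (I₁ + Dq I₂₀) * C₁⁻¹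

/-- `C₂ = 1 + 𝖣J`. -/
def C₂ : PowerSeries ℚ := 1 + Dq J

open PowerSeries

theorem PowerSeries.coeff_ofNat_mul {R : Type*} [Semiring R] (c : ℕ) [c.AtLeastTwo] (f : R⟦X⟧)
    (n : ℕ) : coeff n ((ofNat(c) : R⟦X⟧) * f) = ofNat(c) * coeff n f := by
  rw [← map_ofNat C c, coeff_C_mul]

section QDeriv

variable (R : Type*) [CommRing R]

def qDeriv : Derivation R R⟦X⟧ R⟦X⟧ := (X : R⟦X⟧) • derivative R

variable {R}

theorem coeff_qDeriv (n : ℕ) (f : R⟦X⟧) : coeff n (qDeriv R f) = n * coeff n f := by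
  rcases n with _ | n
  · simp [qDeriv]
  · simp [qDeriv, coeff_succ_X_mul, coeff_derivative, mul_comm]

@[simp]
theorem constantCoeff_qDeriv (f : R⟦X⟧) : constantCoeff (qDeriv R f) = 0 := by
  simpa using coeff_qDeriv 0 f

theorem eq_C_of_qDeriv_eq_zero [IsAddTorsionFree R] {f : R⟦X⟧} (hf : qDeriv R f = 0) :
    f = C (constantCoeff f) := by
  ext (_ | n)
  · simp
  · have h := congrArg (coeff (n + 1)) hf
    rw [coeff_qDeriv, map_zero, ← nsmul_eq_mul, nsmul_eq_zero_iff_right n.succ_ne_zero] at h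
    simp [h]

end QDeriv

theorem Dq_eq_qDeriv (f : ℚ⟦X⟧) : Dq f = qDeriv ℚ f := by
  ext n
  rw [coeff_qDeriv]
  exact coeff_mk _ _

namespace Derivation

variable {R S : Type*} [CommRing R] [CommRing S] [Algebra R S] (D : Derivation R S S)

theorem lagrange_identity (A y₁ y₂ : S) :
    D (A * (y₁ * D y₂ - y₂ * D y₁)) = y₁ * D (A * D y₂) - y₂ * D (A * D y₁) := by
  simp only [leibniz, map_sub, smul_eq_mul]
  ring

theorem map_mul_sq_mul_one_add_eq_zero {A c y j : S} (hy : D (A * D y) + c * y = 0)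
    (hyj : D (A * D (y * j)) + c * (y * j) + A * D y + D (A * y) = 0) :
    D (A * y ^ 2 * (1 + D j)) = 0 := by
  have hwronskian : A * y ^ 2 * (1 + D j) = A * y * y + A * (y * D (y * j) - y * j * D y) := by
    rw [leibniz, smul_eq_mul, smul_eq_mul]
    ring
  rw [hwronskian, map_add, lagrange_identity, D.leibniz (A * y) y, smul_eq_mul, smul_eq_mul]
  linear_combination y * hyj - y * j * hy

end Derivation

theorem Har_eq_harmonic (m : ℕ) : Har m = harmonic m := by
  simp [Har, harmonic]

theorem coeff_I₁_succ (n : ℕ) :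
    coeff (n + 1) I₁
      = 3 * (-1) ^ (n + 1) * ((3 * n + 2).factorial : ℚ) / ((n + 1).factorial) ^ 3 := by
  simp [I₁, show 3 * (n + 1) - 1 = 3 * n + 2 by omega]

theorem coeff_I₂₀_succ (n : ℕ) :
    coeff (n + 1) I₂₀ = coeff (n + 1) I₁ * (3 * harmonic (3 * n + 2) - 3 * harmonic (n + 1)) := by
  simp [I₂₀, I₁, Har_eq_harmonic, show 3 * (n + 1) - 1 = 3 * n + 2 by omega]

theorem coeff_one_I₁ : coeff 1 I₁ = -6 := by
  norm_num [coeff_I₁_succ 0, Nat.factorial]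

theorem coeff_one_I₂₀ : coeff 1 I₂₀ = -9 := by
  norm_num [coeff_I₂₀_succ 0, coeff_one_I₁, harmonic_succ]

theorem coeff_I₁_succ_succ (n : ℕ) :
    ((n : ℚ) + 2) ^ 3 * coeff (n + 2) I₁
      = -(3 * n + 3) * (3 * n + 4) * (3 * n + 5) * coeff (n + 1) I₁ := by
  rw [coeff_I₁_succ, coeff_I₁_succ, show 3 * (n + 1) + 2 = 3 * n + 2 + 1 + 1 + 1 by ring]
  simp only [Nat.factorial_succ (n + 1), Nat.factorial_succ (3 * n + 2 + 1 + 1),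
    Nat.factorial_succ (3 * n + 2 + 1), Nat.factorial_succ (3 * n + 2)]
  push_cast
  field_simp
  ring

theorem three_mul_harmonic_sub_three_mul_harmonic_succ (n : ℕ) :
    3 * harmonic (3 * (n + 1) + 2) - 3 * harmonic (n + 2)
      = 3 * harmonic (3 * n + 2) - 3 * harmonic (n + 1)
        + 3 / (3 * n + 3) + 3 / (3 * n + 4) + 3 / (3 * n + 5) - 3 / (n + 2) := by
  rw [show 3 * (n + 1) + 2 = 3 * n + 2 + 1 + 1 + 1 by ring, harmonic_succ (3 * n + 2 + 1 + 1),
    harmonic_succ (3 * n + 2 + 1), harmonic_succ (3 * n + 2), harmonic_succ (n + 1)]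
  push_cast
  ring

theorem coeff_I₂₀_succ_succ (n : ℕ) :
    ((n : ℚ) + 2) ^ 3 * coeff (n + 2) I₂₀
      + 3 * ((n : ℚ) + 1) * (3 * n + 4) * (3 * n + 5) * coeff (n + 1) I₂₀
      + 3 * ((n : ℚ) + 2) ^ 2 * coeff (n + 2) I₁
      + 3 * (27 * ((n : ℚ) + 1) ^ 2 + 18 * ((n : ℚ) + 1) + 2) * coeff (n + 1) I₁ = 0 := by
  have ha : coeff (n + 2) I₁
      = -(3 * n + 3) * (3 * n + 4) * (3 * n + 5) * coeff (n + 1) I₁ / ((n : ℚ) + 2) ^ 3 := by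
    rw [eq_div_iff (by positivity), mul_comm, coeff_I₁_succ_succ]
  rw [coeff_I₂₀_succ, coeff_I₂₀_succ, three_mul_harmonic_sub_three_mul_harmonic_succ, ha]
  field_simp
  ring

def picardFuchs (f : ℚ⟦X⟧) : ℚ⟦X⟧ := qDeriv ℚ ((1 + 27 * X) * qDeriv ℚ f) + 6 * X * f

theorem coeff_succ_picardFuchs (f : ℚ⟦X⟧) (n : ℕ) :
    coeff (n + 1) (picardFuchs f)
      = ((n : ℚ) + 1) ^ 2 * coeff (n + 1) f + 3 * (3 * n + 1) * (3 * n + 2) * coeff n f := by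
  simp only [picardFuchs, map_add, coeff_qDeriv, add_mul, one_mul, mul_assoc, coeff_ofNat_mul,
    coeff_succ_X_mul]
  push_cast
  ring

theorem coeff_succ_one_add_mul_qDeriv_add_qDeriv (f : ℚ⟦X⟧) (n : ℕ) :
    coeff (n + 1) ((1 + 27 * X) * qDeriv ℚ f + qDeriv ℚ ((1 + 27 * X) * f))
      = 2 * ((n : ℚ) + 1) * coeff (n + 1) f + 27 * (2 * n + 1) * coeff n f := by
  simp only [map_add, coeff_qDeriv, add_mul, one_mul, mul_assoc, coeff_ofNat_mul, coeff_succ_X_mul]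
  push_cast
  ring

theorem constantCoeff_C₁ : constantCoeff C₁ = 1 := by
  simp [C₁, Dq_eq_qDeriv]

theorem coeff_succ_C₁ (n : ℕ) : coeff (n + 1) C₁ = ((n : ℚ) + 1) * coeff (n + 1) I₁ := by
  simp [C₁, Dq_eq_qDeriv, coeff_qDeriv, coeff_one]

theorem constantCoeff_I₁_add_Dq_I₂₀ : constantCoeff (I₁ + Dq I₂₀) = 0 := by
  simp [I₁, Dq_eq_qDeriv]

theorem coeff_succ_I₁_add_Dq_I₂₀ (n : ℕ) :
    coeff (n + 1) (I₁ + Dq I₂₀) = coeff (n + 1) I₁ + ((n : ℚ) + 1) * coeff (n + 1) I₂₀ := by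
  simp [Dq_eq_qDeriv, coeff_qDeriv]

theorem picardFuchs_C₁ : picardFuchs C₁ = 0 := by
  ext (_ | n)
  · simp [picardFuchs]
  rw [coeff_succ_picardFuchs, map_zero]
  rcases n with _ | n
  · rw [coeff_zero_eq_constantCoeff_apply, constantCoeff_C₁, coeff_succ_C₁, coeff_one_I₁]
    norm_num
  · rw [coeff_succ_C₁, coeff_succ_C₁]
    push_cast
    linear_combination coeff_I₁_succ_succ n

theorem picardFuchs_I₁_add_Dq_I₂₀ :
    picardFuchs (I₁ + Dq I₂₀) + (1 + 27 * X) * qDeriv ℚ C₁ + qDeriv ℚ ((1 + 27 * X) * C₁)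
      = 0 := by
  ext (_ | n)
  · simp [picardFuchs]
  rw [add_assoc, map_add, coeff_succ_picardFuchs, coeff_succ_one_add_mul_qDeriv_add_qDeriv,
    map_zero]
  rcases n with _ | n
  · rw [coeff_zero_eq_constantCoeff_apply, coeff_zero_eq_constantCoeff_apply, constantCoeff_C₁,
      constantCoeff_I₁_add_Dq_I₂₀, coeff_succ_C₁, coeff_succ_I₁_add_Dq_I₂₀, coeff_one_I₁,
      coeff_one_I₂₀]
    norm_num
  · rw [coeff_succ_C₁, coeff_succ_C₁, coeff_succ_I₁_add_Dq_I₂₀, coeff_succ_I₁_add_Dq_I₂₀]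
    push_cast
    linear_combination coeff_I₂₀_succ_succ n

theorem C₁_mul_J : C₁ * J = I₁ + Dq I₂₀ := by
  rw [J, mul_comm, mul_assoc, PowerSeries.inv_mul_cancel _ (by simp [constantCoeff_C₁]), mul_one]

theorem stmt8 : (1 + 27 * PowerSeries.X) * C₁ ^ 2 * C₂ = 1 := by
  have hconserved := (qDeriv ℚ).map_mul_sq_mul_one_add_eq_zero picardFuchs_C₁
    (C₁_mul_J ▸ picardFuchs_I₁_add_Dq_I₂₀)
  rw [C₂, Dq_eq_qDeriv, eq_C_of_qDeriv_eq_zero hconserved]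
  simp [constantCoeff_C₁]

end
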